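/- arXiv:1709.08917 — 4 statements merged into one kernel-verified Lean document; each statement's English description precedes it below -/
import Mathlib

section
/- Let m, n ≥ 1 and let k be an integer with 1 ≤ k ≤ min(m, n). There exists a constant c > 0 depending only on m and n such that for every real m × n matrix M and every real C ≥ 1, at least one of the following holds: either there is an (n−k+1)-dimensional linear subspace X of ℝ^n such that ‖Mx‖ ≤ C^{−1}‖x‖ for all x ∈ X, or there is a k-dimensional linear subspace V of ℝ^n spanned by standard basis vectors of ℝ^n such that ‖Mv‖ ≥ c·C^{−1}‖v‖ for all v ∈ V. -/
/-!
If the second alternative fails, every `k`-element set `S` of coordinates carries a vector `v`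
with `‖M v‖ < c C⁻¹ ‖v‖`. Choosing `S` inside the complement of the pivots found so far and
rescaling `v` so that its coordinate of largest modulus (the new pivot) equals `1`, we greedily
obtain `n - k + 1` vectors `w j` of sup norm `1` with `‖M (w j)‖ ≤ c C⁻¹`, each vanishing at the
earlier pivots. Evaluating `x = ∑ a j • w j` at the `i`-th pivot gives
`|a i| ≤ ‖x‖ + ∑_{j < i} |a j|`, hence `∑ |a j| ≤ (2 ^ (n - k + 1) - 1) ‖x‖`. So the `w j` are
independent, and on their span `‖M x‖ ≤ C⁻¹ ‖x‖` as soon as `c = 2 ^ (-(n + 1))`.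
-/

open Finset

variable {n r : ℕ}

lemma add_sum_le_two_pow_mul_of_le_add_sum_Iio {b : Fin r → ℝ} {K : ℝ}
    (h : ∀ i, b i ≤ K + ∑ j ∈ Iio i, b j) : K + ∑ i, b i ≤ 2 ^ r * K := by
  induction r with
  | zero => simp
  | succ r ih =>
    have hlast := h (Fin.last r)
    rw [Fin.Iio_last_eq_map, sum_map, Fin.coe_castSuccEmb] at hlast
    have hinit := ih (b := fun i => b i.castSucc) fun i => by
      have hi := h i.castSucc
      rwa [Fin.Iio_castSucc, sum_map] at hi
    rw [Fin.sum_univ_castSucc, pow_succ]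
    linarith

/-- The `r × r` matrix `(w j (p i))` is unit lower-triangular, and all coordinates of the
vectors `w j` are bounded by `1`. -/
structure IsUnitTriangular (w : Fin r → Fin n → ℝ) (p : Fin r → Fin n) : Prop where
  apply_pivot : ∀ i, w i (p i) = 1
  norm_le_one : ∀ i, ‖w i‖ ≤ 1
  apply_pivot_of_lt : ∀ {i j}, i < j → w j (p i) = 0

namespace IsUnitTriangular

variable {w : Fin r → Fin n → ℝ} {p : Fin r → Fin n}

lemma abs_le_norm_sum_add_sum_abs (hw : IsUnitTriangular w p) (a : Fin r → ℝ) (i : Fin r) :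
    |a i| ≤ ‖∑ j, a j • w j‖ + ∑ j ∈ Iio i, |a j| := by
  set x := ∑ j, a j • w j
  have hx : x (p i) = ∑ j ∈ Iio i, a j * w j (p i) + a i := by
    have hIic : x (p i) = ∑ j ∈ Iic i, a j * w j (p i) := by
      refine (sum_subset (subset_univ _) fun j _ hj => ?_).trans (by simp [x]) |>.symm
      rw [hw.apply_pivot_of_lt (not_le.1 (by simpa using hj)), mul_zero]
    rw [hIic, ← sum_Iio_add_eq_sum_Iic, hw.apply_pivot, mul_one]
  calc |a i| = |x (p i) - ∑ j ∈ Iio i, a j * w j (p i)| := by rw [hx, add_sub_cancel_left]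
    _ ≤ |x (p i)| + ∑ j ∈ Iio i, |a j * w j (p i)| :=
        (abs_sub _ _).trans (add_le_add_right (abs_sum_le_sum_abs _ _) _)
    _ ≤ ‖x‖ + ∑ j ∈ Iio i, |a j| := by
        refine add_le_add (norm_le_pi_norm x (p i)) (sum_le_sum fun j _ => ?_)
        rw [abs_mul]
        exact mul_le_of_le_one_right (abs_nonneg _)
          ((norm_le_pi_norm (w j) (p i)).trans (hw.norm_le_one j))

lemma sum_abs_le_mul_norm_sum (hw : IsUnitTriangular w p) (a : Fin r → ℝ) :
    ∑ i, |a i| ≤ (2 ^ r - 1) * ‖∑ i, a i • w i‖ := by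
  have := add_sum_le_two_pow_mul_of_le_add_sum_Iio (hw.abs_le_norm_sum_add_sum_abs a)
  linarith

lemma linearIndependent (hw : IsUnitTriangular w p) : LinearIndependent ℝ w := by
  refine Fintype.linearIndependent_iff.2 fun a ha i => abs_nonpos_iff.1 ?_
  have := hw.sum_abs_le_mul_norm_sum a
  rw [ha, norm_zero, mul_zero] at this
  exact (single_le_sum (fun j _ => abs_nonneg (a j)) (mem_univ i)).trans this

lemma norm_map_le_of_mem_span {E : Type*} [SeminormedAddCommGroup E] [NormedSpace ℝ E]
    (hw : IsUnitTriangular w p) (f : (Fin n → ℝ) →ₗ[ℝ] E) {ε : ℝ} (hε : 0 ≤ ε)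
    (hf : ∀ i, ‖f (w i)‖ ≤ ε) {x : Fin n → ℝ} (hx : x ∈ Submodule.span ℝ (Set.range w)) :
    ‖f x‖ ≤ (2 ^ r - 1) * ε * ‖x‖ := by
  obtain ⟨a, rfl⟩ := Submodule.mem_span_range_iff_exists_fun ℝ |>.1 hx
  calc ‖f (∑ i, a i • w i)‖ ≤ ∑ i, |a i| * ε := by
        rw [map_sum]
        refine (norm_sum_le _ _).trans (sum_le_sum fun i _ => ?_)
        rw [map_smul, norm_smul, Real.norm_eq_abs]
        exact mul_le_mul_of_nonneg_left (hf i) (abs_nonneg _)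
    _ ≤ (2 ^ r - 1) * ε * ‖∑ i, a i • w i‖ := by
        rw [← sum_mul, mul_right_comm]
        exact mul_le_mul_of_nonneg_right (hw.sum_abs_le_mul_norm_sum a) hε

lemma snoc (hw : IsUnitTriangular w p) {v : Fin n → ℝ} {q : Fin n} (hvq : v q = 1)
    (hv : ‖v‖ ≤ 1) (hvp : ∀ i, v (p i) = 0) :
    IsUnitTriangular (Fin.snoc w v : Fin (r + 1) → Fin n → ℝ) (Fin.snoc p q) where
  apply_pivot i := by
    induction i using Fin.lastCases with
    | last => simpa using hvq
    | cast i => simpa using hw.apply_pivot i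
  norm_le_one i := by
    induction i using Fin.lastCases with
    | last => simpa using hv
    | cast i => simpa using hw.norm_le_one i
  apply_pivot_of_lt {i j} hij := by
    induction j using Fin.lastCases with
    | last =>
      obtain ⟨i, rfl⟩ := Fin.exists_castSucc_eq.2 hij.ne
      simpa using hvp i
    | cast j =>
      induction i using Fin.lastCases with
      | last => exact absurd hij (Fin.castSucc_lt_last j).not_gt
      | cast i => simpa using hw.apply_pivot_of_lt (Fin.castSucc_lt_castSucc_iff.1 hij)

end IsUnitTriangular

lemma exists_isUnitTriangular (G : Set (Fin n → ℝ))
    (hG : ∀ P : Finset (Fin n), #P < r →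
      ∃ v ∈ G, ∃ q, v q = 1 ∧ ‖v‖ ≤ 1 ∧ ∀ i ∈ P, v i = 0) :
    ∃ (w : Fin r → Fin n → ℝ) (p : Fin r → Fin n), IsUnitTriangular w p ∧ ∀ i, w i ∈ G := by
  induction r with
  | zero => exact ⟨Fin.elim0, Fin.elim0, ⟨(·.elim0), (·.elim0), fun {i} => i.elim0⟩, (·.elim0)⟩
  | succ r ih =>
    obtain ⟨w, p, hw, hwG⟩ := ih fun P hP => hG P (Nat.lt_succ_of_lt hP)
    have hcard : #(univ.image p) < r + 1 :=
      Nat.lt_succ_of_le (card_image_le.trans (card_fin r).le)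
    obtain ⟨v, hvG, q, hvq, hv, hvp⟩ := hG _ hcard
    refine ⟨_, _, hw.snoc hvq hv fun i => hvp _ (mem_image_of_mem p (mem_univ i)), fun i => ?_⟩
    induction i using Fin.lastCases with
    | last => simpa using hvG
    | cast i => simpa using hwG i

lemma exists_apply_eq_one_of_norm_map_lt {ι E : Type*} [Fintype ι] [SeminormedAddCommGroup E]
    [NormedSpace ℝ E] (f : (ι → ℝ) →ₗ[ℝ] E) {ε : ℝ} {v : ι → ℝ} (hv : ‖f v‖ < ε * ‖v‖) :
    ∃ (u : ι → ℝ) (q : ι), u q = 1 ∧ ‖u‖ ≤ 1 ∧ (∀ i, v i = 0 → u i = 0) ∧ ‖f u‖ ≤ ε := by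
  have hv0 : v ≠ 0 := by rintro rfl; simp at hv
  obtain ⟨i, -⟩ := Function.ne_iff.1 hv0
  have : Nonempty ι := ⟨i⟩
  obtain ⟨q, hq⟩ : ∃ q, ‖v q‖ = ‖v‖ := (IsGreatest.pi_norm v).1
  have hvq : ‖v q‖ ≠ 0 := hq ▸ norm_ne_zero_iff.2 hv0
  refine ⟨(v q)⁻¹ • v, q, inv_mul_cancel₀ (norm_ne_zero_iff.1 hvq), ?_, fun i hi => by simp [hi], ?_⟩
  · rw [norm_smul, norm_inv, hq, inv_mul_cancel₀ (hq ▸ hvq)]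
  · rw [map_smul, norm_smul, norm_inv, hq, inv_mul_le_iff₀ (norm_pos_iff.2 hv0), mul_comm]
    exact hv.le

lemma exists_pivot_vector_of_forall_card_eq {E : Type*} [SeminormedAddCommGroup E]
    [NormedSpace ℝ E] (f : (Fin n → ℝ) →ₗ[ℝ] E) {k : ℕ} {ε : ℝ}
    (hf : ∀ S : Finset (Fin n), #S = k → ∃ v, (∀ i ∉ S, v i = 0) ∧ ‖f v‖ < ε * ‖v‖)
    {P : Finset (Fin n)} (hP : #P + k ≤ n) :
    ∃ u, ‖f u‖ ≤ ε ∧ ∃ q, u q = 1 ∧ ‖u‖ ≤ 1 ∧ ∀ i ∈ P, u i = 0 := by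
  obtain ⟨S, hSP, hS⟩ := exists_subset_card_eq (s := Pᶜ) (n := k)
    (by rw [card_compl, Fintype.card_fin]; omega)
  obtain ⟨v, hvS, hv⟩ := hf S hS
  obtain ⟨u, q, huq, hu, hvu, hfu⟩ := exists_apply_eq_one_of_norm_map_lt f hv
  exact ⟨u, hfu, q, huq, hu, fun i hi => hvu i (hvS i fun hiS => mem_compl.1 (hSP hiS) hi)⟩

theorem statement5_general (m n k : ℕ) (hk2 : k ≤ min m n) :
    ∃ c : ℝ, 0 < c ∧ ∀ (M : Matrix (Fin m) (Fin n) ℝ) (C : ℝ), 1 ≤ C →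
      (∃ X : Submodule ℝ (Fin n → ℝ), Module.finrank ℝ X = n - k + 1 ∧
        ∀ x ∈ X, ‖M.mulVec x‖ ≤ C⁻¹ * ‖x‖) ∨
      (∃ S : Finset (Fin n), S.card = k ∧
        ∀ v : Fin n → ℝ, (∀ i ∉ S, v i = 0) → ‖M.mulVec v‖ ≥ c * C⁻¹ * ‖v‖) := by
  refine ⟨(2 ^ (n + 1))⁻¹, by positivity, fun M C hC => or_iff_not_imp_right.2 fun hB => ?_⟩
  push Not at hB
  set ε : ℝ := (2 ^ (n + 1))⁻¹ * C⁻¹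
  have hkn : k ≤ n := hk2.trans (min_le_right m n)
  obtain ⟨w, p, hw, hMw⟩ := exists_isUnitTriangular (r := n - k + 1) {u | ‖M.mulVec u‖ ≤ ε}
    fun P hP => exists_pivot_vector_of_forall_card_eq M.mulVecLin hB (by omega)
  refine ⟨Submodule.span ℝ (Set.range w), by rw [finrank_span_eq_card hw.linearIndependent,
    Fintype.card_fin], fun x hx => ?_⟩
  have hcoef : (2 ^ (n - k + 1) - 1) * ε ≤ C⁻¹ := by
    have : (2 : ℝ) ^ (n - k + 1) ≤ 2 ^ (n + 1) := pow_le_pow_right₀ one_le_two (by omega)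
    rw [← mul_assoc, ← div_eq_mul_inv]
    exact mul_le_of_le_one_left (by positivity) ((div_le_one (by positivity)).2 (by linarith))
  calc ‖M.mulVec x‖ ≤ (2 ^ (n - k + 1) - 1) * ε * ‖x‖ :=
        hw.norm_map_le_of_mem_span M.mulVecLin (by positivity) hMw hx
    _ ≤ C⁻¹ * ‖x‖ := mul_le_mul_of_nonneg_right hcoef (norm_nonneg x)

/-- For any real `m × n` matrix `M` and any `C ≥ 1`, either
`M` is small (in sup norm) on a linear subspace of dimension `n - k + 1`, or
`M` is bounded below by `≫ C⁻¹` on a `k`-dimensional coordinate subspace. -/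
theorem statement5 (m n k : ℕ) (hm : 1 ≤ m) (hn : 1 ≤ n)
    (hk1 : 1 ≤ k) (hk2 : k ≤ min m n) :
    ∃ c : ℝ, 0 < c ∧ ∀ (M : Matrix (Fin m) (Fin n) ℝ) (C : ℝ), 1 ≤ C →
      (∃ X : Submodule ℝ (Fin n → ℝ), Module.finrank ℝ X = n - k + 1 ∧
        ∀ x ∈ X, ‖M.mulVec x‖ ≤ C⁻¹ * ‖x‖) ∨
      (∃ S : Finset (Fin n), S.card = k ∧
        ∀ v : Fin n → ℝ, (∀ i ∉ S, v i = 0) → ‖M.mulVec v‖ ≥ c * C⁻¹ * ‖v‖) :=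
  statement5_general m n k hk2
end

section
/- Let d ≥ 2, R ≥ 1, n ≥ 1, let f = (f_1,…,f_R) be polynomials of degree d in n variables with real coefficients, and let c_0 > 0. Then there exist constants C_1 ≥ 1 and C_3 > 0 depending only on f and c_0 such that the following holds. Let β ∈ ℝ^R∖{0}, let B ≥ 1, let T_1,…,T_{d−1} ∈ (0, B], and let x^{(1)},…,x^{(d−1)}, y^{(1)},…,y^{(d−1)} ∈ ℝ^n satisfy T_i ≤ ‖x^{(i)}‖ ≤ 2T_i and T_i ≤ ‖y^{(i)}‖ ≤ 2T_i for all i, ‖m^{(β·f)}(x^{(1)},…,x^{(d−1)})‖ ≤ ‖β‖·B^{d−2} and ‖m^{(β·f)}(y^{(1)},…,y^{(d−1)})‖ ≤ ‖β‖·B^{d−2}. Set u^{(i)} = y^{(i)} − x^{(i)}, and assume that ‖u^{(i)}‖ ≤ C_1^{−1}·T_i for all i and that ‖J^{(β·f)}(x^{(1)},…,x^{(d−1)})·(u^{(1)},…,u^{(d−1)})‖ ≥ c_0·‖β‖·T_1⋯T_{d−1}·max_{1≤i≤d−1} ‖u^{(i)}‖/T_i. Then ‖u^{(i)}‖ ≤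 C_3·B^{d−2}·T_i/(T_1⋯T_{d−1}) for every i = 1,…,d−1. -/
open MvPolynomial

noncomputable section

/-- Iterated partial derivative along a list of variable indices. -/
def iterPderiv {n : ℕ} {K : Type*} [CommSemiring K] (js : List (Fin n))
    (f : MvPolynomial (Fin n) K) : MvPolynomial (Fin n) K :=
  js.foldr (fun j g => pderiv j g) f

/-- The system of multilinear forms `m^{(f)}`. -/
def mForm {K : Type*} [CommSemiring K] (d n : ℕ) (f : MvPolynomial (Fin n) K)
    (x : Fin (d - 1) → Fin n → K) : Fin n → K :=
  fun i => ∑ j : Fin (d - 1) → Fin n,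
    (∏ k, x k (j k)) * eval (0 : Fin n → K) (pderiv i (iterPderiv (List.ofFn j) f))

/-- The `n × (d-1)n` Jacobian matrix `J^f` of `m^{(f)}`. -/
def jacMat {K : Type*} [CommSemiring K] (d n : ℕ) (f : MvPolynomial (Fin n) K)
    (x : Fin (d - 1) → Fin n → K) : Matrix (Fin n) (Fin (d - 1) × Fin n) K :=
  fun i kl => mForm d n f (Function.update x kl.1 (Pi.single kl.2 1)) i

/-- σ*(H) for a system of complex forms. -/
def sigmaStar (d n R : ℕ) (H : Fin R → MvPolynomial (Fin n) ℂ) : ℕ :=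
  sSup {s : ℕ | ∃ β : Fin R → ℂ, β ≠ 0 ∧ ∃ x : Fin (d - 1) → Fin n → ℂ,
    (∀ k, x k ≠ 0) ∧ mForm d n (∑ ρ, β ρ • H ρ) x = 0 ∧
    s = n - (jacMat d n (∑ ρ, β ρ • H ρ) x).rank}

/-- σ* for a system with real coefficients. -/
def sigmaStarR (d n R : ℕ) (F : Fin R → MvPolynomial (Fin n) ℝ) : ℕ :=
  sigmaStar d n R fun ρ => (F ρ).map (algebraMap ℝ ℂ)

/-- σ* for a system with integer coefficients. -/
def sigmaStarZ (d n R : ℕ) (F : Fin R → MvPolynomial (Fin n) ℤ) : ℕ :=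
  sigmaStar d n R fun ρ => (F ρ).map (Int.castRingHom ℂ)

/-- `‖f^{[d]}‖`. -/
def normFd (d n : ℕ) (f : MvPolynomial (Fin n) ℝ) : ℝ :=
  (d.factorial : ℝ)⁻¹ * ⨆ j : Fin d → Fin n, |eval (0 : Fin n → ℝ) (iterPderiv (List.ofFn j) f)|

/-- `N^aux_f(B)`. -/
def Naux (d n : ℕ) (g : MvPolynomial (Fin n) ℝ) (B : ℝ) : ℕ :=
  Set.ncard {x : Fin (d - 1) → Fin n → ℤ |
    (∀ k, ‖(fun i => (x k i : ℝ))‖ ≤ B) ∧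
    ‖mForm d n g (fun k i => (x k i : ℝ))‖ < normFd d n g * B ^ (d - 2)}

end

/-! Write `u = y - x` and `ε = max_i ‖u⁽ⁱ⁾‖ / T_i ≤ C₁⁻¹`. Since `m = m^{(β·f)}` is multilinear in
its `d - 1` blocks, expanding `m (x + u)` over the sets of blocks that receive `u` gives
`m y = m x + J(x) u + R`, where every term of `R` carries at least two blocks of `u`, so
`‖R‖ ≪ ‖β‖ ε² T_1⋯T_{d-1}`. Hence `c₀ ‖β‖ ε ∏ T ≤ ‖J(x) u‖ ≤ 2 ‖β‖ B^{d-2} + O(‖β‖ ε² ∏ T)`, and for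
`C₁` large the quadratic term is at most half the left-hand side, leaving `ε ≪ B^{d-2} / ∏ T`. -/

open Finset Function

lemma Finset.sum_univ_eq_empty_add_sum_singleton_add {ι M : Type*} [Fintype ι] [DecidableEq ι]
    [AddCommMonoid M] (g : Finset ι → M) :
    ∑ s, g s = g ∅ + ∑ k, g {k} + ∑ s with 2 ≤ #s, g s := by
  rw [← sum_filter_add_sum_filter_not univ (fun s => 2 ≤ #s), add_comm]
  congr 1
  have hsmall : ({s | ¬ 2 ≤ #s} : Finset (Finset ι)) =
      insert ∅ (univ.map ⟨singleton, singleton_injective⟩) := by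
    ext s
    simp only [mem_filter, mem_univ, true_and, not_le, mem_insert, mem_map, Embedding.coeFn_mk]
    rw [Nat.lt_succ_iff, Nat.le_one_iff_eq_zero_or_eq_one, card_eq_zero, card_eq_one]
    simp [eq_comm]
  rw [hsmall, sum_insert (by simp), sum_map]
  rfl

lemma norm_sum_smul_le {𝕜 ι F : Type*} [NormedField 𝕜] [Fintype ι] [SeminormedAddCommGroup F]
    [NormedSpace 𝕜 F] (β : ι → 𝕜) (v : ι → F) : ‖∑ ρ, β ρ • v ρ‖ ≤ ‖β‖ * ∑ ρ, ‖v ρ‖ := by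
  rw [mul_sum]
  refine (norm_sum_le _ _).trans (sum_le_sum fun ρ _ => ?_)
  rw [norm_smul]
  gcongr
  exact norm_le_pi_norm β ρ

lemma Real.le_iSup_div_mul {ι : Type*} [Finite ι] (v T : ι → ℝ) {k : ι} (hT : 0 < T k) :
    v k ≤ (⨆ i, v i / T i) * T k :=
  (div_le_iff₀ hT).mp (le_ciSup (f := fun i => v i / T i) (Set.finite_range _).bddAbove k)

namespace ContinuousMultilinearMap

variable {𝕜 ι : Type*} [NontriviallyNormedField 𝕜] [Fintype ι] [DecidableEq ι]
  {E : ι → Type*} [∀ i, SeminormedAddCommGroup (E i)] [∀ i, NormedSpace 𝕜 (E i)]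
  {F : Type*} [SeminormedAddCommGroup F] [NormedSpace 𝕜 F] (M : ContinuousMultilinearMap 𝕜 E F)

lemma map_add_sub_sub_sum_update (x u : ∀ i, E i) :
    M (x + u) - M x - ∑ k, M (update x k (u k)) = ∑ s with 2 ≤ #s, M (s.piecewise u x) := by
  rw [add_comm x u, map_add_univ, sum_univ_eq_empty_add_sum_singleton_add, piecewise_empty]
  simp only [piecewise_singleton]
  abel

variable {M} {x y u : ∀ i, E i} {T : ι → ℝ} {ε : ℝ}

lemma norm_map_piecewise_le (hx : ∀ k, ‖x k‖ ≤ T k) (hu : ∀ k, ‖u k‖ ≤ ε * T k)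
    (s : Finset ι) : ‖M (s.piecewise u x)‖ ≤ ‖M‖ * ε ^ #s * ∏ k, T k :=
  calc ‖M (s.piecewise u x)‖ ≤ ‖M‖ * ∏ k, ‖s.piecewise u x k‖ := M.le_opNorm _
    _ ≤ ‖M‖ * ∏ k, s.piecewise (fun k => ε * T k) T k := by
      gcongr with k
      by_cases hk : k ∈ s <;> simp [hk, hu, hx]
    _ = ‖M‖ * ε ^ #s * ∏ k, T k := by
      rw [prod_piecewise, univ_inter, prod_mul_distrib, prod_const, ← compl_eq_univ_sdiff,
        mul_assoc, mul_assoc, prod_mul_prod_compl]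

lemma norm_map_add_sub_sub_sum_update_le (hε₀ : 0 ≤ ε) (hε₁ : ε ≤ 1) (hx : ∀ k, ‖x k‖ ≤ T k)
    (hu : ∀ k, ‖u k‖ ≤ ε * T k) :
    ‖M (x + u) - M x - ∑ k, M (update x k (u k))‖ ≤
      2 ^ Fintype.card ι * (‖M‖ * ε ^ 2 * ∏ k, T k) := by
  have hT : 0 ≤ ∏ k, T k := prod_nonneg fun k _ => (norm_nonneg _).trans (hx k)
  rw [map_add_sub_sub_sum_update]
  calc ‖∑ s with 2 ≤ #s, M (s.piecewise u x)‖
      ≤ ∑ s with 2 ≤ #s, ‖M (s.piecewise u x)‖ := norm_sum_le _ _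
    _ ≤ ∑ s : Finset ι with 2 ≤ #s, ‖M‖ * ε ^ 2 * ∏ k, T k := by
      gcongr with s hs
      refine (norm_map_piecewise_le hx hu s).trans ?_
      have hpow := pow_le_pow_of_le_one hε₀ hε₁ (mem_filter.mp hs).2
      gcongr
    _ ≤ 2 ^ Fintype.card ι * (‖M‖ * ε ^ 2 * ∏ k, T k) := by
      rw [sum_const, nsmul_eq_mul]
      gcongr
      exact_mod_cast (card_filter_le _ _).trans (by simp [Fintype.card_finset])

lemma norm_sum_update_sub_le (M : ContinuousMultilinearMap 𝕜 E F) (hε₀ : 0 ≤ ε) (hε₁ : ε ≤ 1)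
    (hx : ∀ k, ‖x k‖ ≤ T k) (hxy : ∀ k, ‖y k - x k‖ ≤ ε * T k) :
    ‖∑ k, M (update x k (y k - x k))‖ ≤
      ‖M y‖ + ‖M x‖ + 2 ^ Fintype.card ι * (‖M‖ * ε ^ 2 * ∏ k, T k) := by
  have hrem := norm_map_add_sub_sub_sum_update_le (M := M) (u := y - x) hε₀ hε₁ hx hxy
  rw [add_sub_cancel] at hrem
  calc ‖∑ k, M (update x k (y k - x k))‖
      = ‖M y - M x - (M y - M x - ∑ k, M (update x k ((y - x) k)))‖ := by
        rw [sub_sub_cancel]; rfl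
    _ ≤ ‖M y‖ + ‖M x‖ + ‖M y - M x - ∑ k, M (update x k ((y - x) k))‖ :=
      (norm_sub_le _ _).trans (by gcongr; exact norm_sub_le _ _)
    _ ≤ _ := by gcongr

end ContinuousMultilinearMap

noncomputable section MForm

variable {𝕜 : Type*} [NontriviallyNormedField 𝕜] {d n : ℕ}

lemma iterPderiv_add (js : List (Fin n)) (p q : MvPolynomial (Fin n) 𝕜) :
    iterPderiv js (p + q) = iterPderiv js p + iterPderiv js q := by
  induction js with
  | nil => rfl
  | cons j js ih => simp only [iterPderiv, List.foldr_cons] at ih ⊢; rw [ih, map_add]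

lemma iterPderiv_smul (js : List (Fin n)) (c : 𝕜) (p : MvPolynomial (Fin n) 𝕜) :
    iterPderiv js (c • p) = c • iterPderiv js p := by
  induction js with
  | nil => rfl
  | cons j js ih => simp only [iterPderiv, List.foldr_cons] at ih ⊢; rw [ih, Derivation.map_smul]

def mFormCoeff {m : ℕ} (g : MvPolynomial (Fin n) 𝕜) (j : Fin m → Fin n) : Fin n → 𝕜 :=
  fun i => eval 0 (pderiv i (iterPderiv (List.ofFn j) g))

variable (𝕜) in
/-- `g ↦ m^{(g)}`, with `m^{(g)}` seen as a continuous multilinear map in the blocks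
`x⁽¹⁾, …, x⁽ᵈ⁻¹⁾`, so that multilinear expansion and operator-norm bounds apply to it. -/
def mFormMultilinear (d n : ℕ) :
    MvPolynomial (Fin n) 𝕜 →ₗ[𝕜]
      ContinuousMultilinearMap 𝕜 (fun _ : Fin (d - 1) => Fin n → 𝕜) (Fin n → 𝕜) where
  toFun g := ∑ j, ContinuousMultilinearMap.compContinuousLinearMap
    (ContinuousMultilinearMap.mkPiRing 𝕜 (Fin (d - 1)) (mFormCoeff g j))
    fun k => ContinuousLinearMap.proj (j k)
  map_add' p q := by
    ext x i
    simp [mFormCoeff, iterPderiv_add, sum_add_distrib, mul_add]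
  map_smul' c p := by
    ext x i
    simp [mFormCoeff, iterPderiv_smul, mul_sum, mul_left_comm]

lemma mFormMultilinear_apply (g : MvPolynomial (Fin n) 𝕜) (x : Fin (d - 1) → Fin n → 𝕜) :
    mFormMultilinear 𝕜 d n g x = mForm d n g x := by
  ext i
  simp [mFormMultilinear, mForm, mFormCoeff]

lemma norm_mFormMultilinear_sum_smul_le {R : ℕ} (β : Fin R → 𝕜)
    (f : Fin R → MvPolynomial (Fin n) 𝕜) :
    ‖mFormMultilinear 𝕜 d n (∑ ρ, β ρ • f ρ)‖ ≤ ‖β‖ * ∑ ρ, ‖mFormMultilinear 𝕜 d n (f ρ)‖ := by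
  simp only [map_sum, map_smul]
  exact norm_sum_smul_le _ _

lemma jacMat_mulVec_eq_sum_update (g : MvPolynomial (Fin n) 𝕜) (x u : Fin (d - 1) → Fin n → 𝕜) :
    (jacMat d n g x).mulVec (fun kl => u kl.1 kl.2) =
      ∑ k, mFormMultilinear 𝕜 d n g (update x k (u k)) := by
  ext i
  simp only [Matrix.mulVec, dotProduct, jacMat, Fintype.sum_prod_type, ← mFormMultilinear_apply,
    Finset.sum_apply]
  refine sum_congr rfl fun k _ => ?_
  conv_rhs => rw [← ContinuousMultilinearMap.toContinuousLinearMap_apply, pi_eq_sum_univ' (u k),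
    map_sum]
  simp [mul_comm]

lemma norm_jacMat_mulVec_sub_le (g : MvPolynomial (Fin n) 𝕜) {x y : Fin (d - 1) → Fin n → 𝕜}
    {T : Fin (d - 1) → ℝ} {ε : ℝ} (hε₀ : 0 ≤ ε) (hε₁ : ε ≤ 1) (hx : ∀ k, ‖x k‖ ≤ 2 * T k)
    (hxy : ∀ k, ‖y k - x k‖ ≤ ε * T k) :
    ‖(jacMat d n g x).mulVec (fun kl => (y kl.1 - x kl.1) kl.2)‖ ≤
      ‖mForm d n g y‖ + ‖mForm d n g x‖ +
        4 ^ (d - 1) * (‖mFormMultilinear 𝕜 d n g‖ * ε ^ 2 * ∏ k, T k) := by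
  have hT : ∀ k, 0 ≤ T k := fun k => by linarith [norm_nonneg (x k), hx k]
  have h := (mFormMultilinear 𝕜 d n g).norm_sum_update_sub_le hε₀ hε₁ hx
    fun k => (hxy k).trans (by nlinarith [hT k])
  rw [← jacMat_mulVec_eq_sum_update, mFormMultilinear_apply, mFormMultilinear_apply,
    prod_mul_distrib, prod_const, card_univ, Fintype.card_fin] at h
  refine h.trans_eq ?_
  rw [show (4 : ℝ) = 2 * 2 by norm_num, mul_pow]
  ring

end MForm

theorem statement7_general (d R n : ℕ)
    (f : Fin R → MvPolynomial (Fin n) ℝ)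
    (c₀ : ℝ) (hc₀ : 0 < c₀) :
    ∃ C₁ C₃ : ℝ, 1 ≤ C₁ ∧ 0 < C₃ ∧
      ∀ β : Fin R → ℝ, β ≠ 0 → ∀ B : ℝ, 1 ≤ B →
      ∀ T : Fin (d - 1) → ℝ, (∀ k, 0 < T k ∧ T k ≤ B) →
      ∀ x y : Fin (d - 1) → Fin n → ℝ,
        (∀ k, T k ≤ ‖x k‖ ∧ ‖x k‖ ≤ 2 * T k) →
        (∀ k, T k ≤ ‖y k‖ ∧ ‖y k‖ ≤ 2 * T k) →
        ‖mForm d n (∑ ρ, β ρ • f ρ) x‖ ≤ ‖β‖ * B ^ (d - 2) →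
        ‖mForm d n (∑ ρ, β ρ • f ρ) y‖ ≤ ‖β‖ * B ^ (d - 2) →
        (∀ k, ‖y k - x k‖ ≤ C₁⁻¹ * T k) →
        ‖(jacMat d n (∑ ρ, β ρ • f ρ) x).mulVec (fun kl => (y kl.1 - x kl.1) kl.2)‖ ≥
          c₀ * ‖β‖ * (∏ k, T k) * ⨆ k, ‖y k - x k‖ / T k →
        ∀ k, ‖y k - x k‖ ≤ C₃ * B ^ (d - 2) * T k / ∏ k', T k' := by
  set K := ∑ ρ, ‖mFormMultilinear ℝ d n (f ρ)‖
  set C₁ := max 1 (2 * 4 ^ (d - 1) * K / c₀)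
  have hC₁ : 1 ≤ C₁ := le_max_left _ _
  refine ⟨C₁, 4 / c₀, hC₁, by positivity, ?_⟩
  intro β hβ B _ T hT x y hx _ hmx hmy hu hJ k₀
  set ε := ⨆ k, ‖y k - x k‖ / T k
  have hTpos : ∀ k, 0 < T k := fun k => (hT k).1
  have hTprod : 0 < ∏ k, T k := prod_pos fun k _ => hTpos k
  have hε : ∀ k, ‖y k - x k‖ ≤ ε * T k := fun k =>
    Real.le_iSup_div_mul (fun k => ‖y k - x k‖) T (hTpos k)
  have hε₀ : 0 ≤ ε := Real.iSup_nonneg fun k => div_nonneg (norm_nonneg _) (hTpos k).le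
  have hεC₁ : ε * C₁ ≤ 1 := by
    rw [← le_div_iff₀ (one_pos.trans_le hC₁), one_div]
    exact Real.iSup_le (fun k => (div_le_iff₀ (hTpos k)).mpr (hu k)) (by positivity)
  have hquad := norm_jacMat_mulVec_sub_le (∑ ρ, β ρ • f ρ) hε₀ (by nlinarith) (fun k => (hx k).2) hε
  have hM := norm_mFormMultilinear_sum_smul_le (d := d) β f
  have habsorb : 4 ^ (d - 1) * K * ε ≤ c₀ / 2 := by
    have : 2 * 4 ^ (d - 1) * K ≤ c₀ * C₁ := by rw [← div_le_iff₀' hc₀]; exact le_max_right _ _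
    nlinarith
  have hεB : ε * ∏ k, T k ≤ 4 / c₀ * B ^ (d - 2) := by
    rw [div_mul_eq_mul_div, le_div_iff₀ hc₀]
    refine le_of_mul_le_mul_left ?_ (norm_pos_iff.mpr hβ)
    have hquadM :=
      mul_le_mul_of_nonneg_right hM (by positivity : 0 ≤ 4 ^ (d - 1) * ε ^ 2 * ∏ k, T k)
    have hquadK := mul_le_mul_of_nonneg_left habsorb (by positivity : 0 ≤ ‖β‖ * ε * ∏ k, T k)
    linarith
  calc ‖y k₀ - x k₀‖ ≤ ε * T k₀ := hε k₀
    _ ≤ 4 / c₀ * B ^ (d - 2) * T k₀ / ∏ k', T k' := by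
      rw [le_div_iff₀ hTprod, mul_right_comm]
      exact mul_le_mul_of_nonneg_right hεB (hTpos k₀).le

/-- Two nearby solutions of the auxiliary inequality in a
dyadic block, at which the Jacobian acts nondegenerately, must in fact be very
close: `‖u^{(i)}‖ ≪ B^{d-2} T_i / (T_1⋯T_{d-1})`. -/
theorem statement7 (d R n : ℕ) (hd : 2 ≤ d) (hR : 1 ≤ R) (hn : 1 ≤ n)
    (f : Fin R → MvPolynomial (Fin n) ℝ)
    (hdeg : ∀ ρ, (f ρ).totalDegree = d)
    (c₀ : ℝ) (hc₀ : 0 < c₀) :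
    ∃ C₁ C₃ : ℝ, 1 ≤ C₁ ∧ 0 < C₃ ∧
      ∀ β : Fin R → ℝ, β ≠ 0 → ∀ B : ℝ, 1 ≤ B →
      ∀ T : Fin (d - 1) → ℝ, (∀ k, 0 < T k ∧ T k ≤ B) →
      ∀ x y : Fin (d - 1) → Fin n → ℝ,
        (∀ k, T k ≤ ‖x k‖ ∧ ‖x k‖ ≤ 2 * T k) →
        (∀ k, T k ≤ ‖y k‖ ∧ ‖y k‖ ≤ 2 * T k) →
        ‖mForm d n (∑ ρ, β ρ • f ρ) x‖ ≤ ‖β‖ * B ^ (d - 2) →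
        ‖mForm d n (∑ ρ, β ρ • f ρ) y‖ ≤ ‖β‖ * B ^ (d - 2) →
        (∀ k, ‖y k - x k‖ ≤ C₁⁻¹ * T k) →
        ‖(jacMat d n (∑ ρ, β ρ • f ρ) x).mulVec (fun kl => (y kl.1 - x kl.1) kl.2)‖ ≥
          c₀ * ‖β‖ * (∏ k, T k) * ⨆ k, ‖y k - x k‖ / T k →
        ∀ k, ‖y k - x k‖ ≤ C₃ * B ^ (d - 2) * T k / ∏ k', T k' :=
  statement7_general d R n f c₀ hc₀
end

section
/- Let n ≥ 1 and 1 ≤ m ≤ n. Let y_1,…,y_m ∈ ℂ^n∖{0} be pairwise linearly independent (i.e., for ℓ ≠ ℓ', the vectors y_ℓ and y_{ℓ'} span a 2-dimensional subspace), and let v_1,…,v_m ∈ ℂ^n. Suppose that Σ_{ℓ=1}^{m} (b·v_ℓ)/(b·y_ℓ) = 0 for every b ∈ ℂ^n such that b·y_ℓ ≠ 0 for all ℓ = 1,…,m. Then there exist μ_1,…,μ_m ∈ ℂ with μ_1 + ⋯ + μ_m = 0 and v_ℓ = μ_ℓ·y_ℓ for every ℓ = 1,…,m. -/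
/-!
Write `φ ℓ = y ℓ ⬝ᵥ ·` and `ψ ℓ = v ℓ ⬝ᵥ ·`. Clearing denominators, the hypothesis says that
`∑ ℓ, ψ ℓ * ∏ k ≠ ℓ, φ k` vanishes off the hyperplanes `ker (φ ℓ)`; restricted to a line
`t ↦ b + t • c` with every `φ ℓ c ≠ 0` it is a polynomial in `t` with infinitely many roots, so it
vanishes everywhere. On `ker (φ ℓ)` only the term `ψ ℓ * ∏ k ≠ ℓ, φ k` survives. By pairwise
independence no `φ k` with `k ≠ ℓ` vanishes on `ker (φ ℓ)`, and finitely many nonzero functionals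
have a common non-root, so `ψ ℓ` vanishes on `ker (φ ℓ)`, i.e. `ψ ℓ = μ ℓ • φ ℓ`. Substituting back
gives `∑ ℓ, μ ℓ = 0`.
-/

open Finset Module Polynomial

theorem Finset.sum_mul_prod_erase_eq_prod_mul_sum_div {ι K : Type*} [Fintype ι] [DecidableEq ι]
    [Field K] (a d : ι → K) (hd : ∀ i, d i ≠ 0) :
    ∑ i, a i * ∏ k ∈ univ.erase i, d k = (∏ k, d k) * ∑ i, a i / d i := by
  rw [Finset.mul_sum]
  refine Finset.sum_congr rfl fun i _ => ?_
  rw [← Finset.prod_erase_mul univ d (mem_univ i)]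
  field_simp [hd i]

namespace Module.Dual

variable {K V : Type*} [Field K] [AddCommGroup V] [Module K V]

theorem exists_smul_eq_of_ker_le {f g : Dual K V} (h : LinearMap.ker g ≤ LinearMap.ker f) :
    ∃ a : K, a • g = f := by
  have : f ∈ Submodule.span K (Set.range fun _ : Unit => g) :=
    mem_span_of_iInf_ker_le_ker (by simpa using h)
  simpa [Submodule.mem_span_singleton] using this

theorem exists_mem_ker_apply_ne_zero {f g : Dual K V} (h : LinearIndependent K ![f, g]) :
    ∃ x ∈ LinearMap.ker g, f x ≠ 0 := by
  by_contra! hker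
  obtain ⟨a, ha⟩ := exists_smul_eq_of_ker_le hker
  exact (linearIndependent_fin2.mp h).2 a ha

theorem eval_C_add_C_mul_X (f : Dual K V) (b c : V) (t : K) :
    (C (f b) + C (f c) * X).eval t = f (b + t • c) := by
  simp only [eval_add, eval_mul, eval_C, eval_X, map_add, map_smul, smul_eq_mul]
  ring

theorem exists_forall_apply_ne_zero [Infinite K] {ι : Type*} [Finite ι] {φ : ι → Dual K V}
    (hφ : ∀ ℓ, φ ℓ ≠ 0) : ∃ b, ∀ ℓ, φ ℓ b ≠ 0 :=
  exists_forall_ne_zero_of_forall_exists φ fun ℓ => DFunLike.ne_iff.mp (hφ ℓ)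

variable {ι : Type*} [Fintype ι] [DecidableEq ι]

def sumDivNumerator (φ ψ : ι → Dual K V) (b : V) : K :=
  ∑ ℓ, ψ ℓ b * ∏ k ∈ univ.erase ℓ, φ k b

variable {φ ψ : ι → Dual K V}

theorem sumDivNumerator_of_apply_eq_zero {ℓ₀ : ι} {b : V} (hb : φ ℓ₀ b = 0) :
    sumDivNumerator φ ψ b = ψ ℓ₀ b * ∏ k ∈ univ.erase ℓ₀, φ k b := by
  refine Finset.sum_eq_single ℓ₀ (fun ℓ _ hℓ => ?_) (by simp)
  rw [Finset.prod_eq_zero (Finset.mem_erase.mpr ⟨Ne.symm hℓ, mem_univ ℓ₀⟩) hb, mul_zero]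

variable [Infinite K]

theorem sumDivNumerator_eq_zero (hφ : ∀ ℓ, φ ℓ ≠ 0)
    (h : ∀ b, (∀ ℓ, φ ℓ b ≠ 0) → ∑ ℓ, ψ ℓ b / φ ℓ b = 0) (b : V) :
    sumDivNumerator φ ψ b = 0 := by
  classical
  obtain ⟨c, hc⟩ := exists_forall_apply_ne_zero hφ
  let line (f : Dual K V) : K[X] := C (f b) + C (f c) * X
  let q : K[X] := ∑ ℓ, line (ψ ℓ) * ∏ k ∈ univ.erase ℓ, line (φ k)
  have hq : ∀ t : K, q.eval t = sumDivNumerator φ ψ (b + t • c) := by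
    intro t
    simp only [q, line, eval_finsetSum, eval_mul, eval_prod, eval_C_add_C_mul_X, sumDivNumerator]
  -- the excluded `t` are those with `b + t • c ∈ ker (φ ℓ)` for some `ℓ`
  have hroots : (↑(univ.image fun ℓ => -φ ℓ b / φ ℓ c) : Set K)ᶜ ⊆ {t | q.IsRoot t} := by
    intro t ht
    have hne : ∀ ℓ, φ ℓ (b + t • c) ≠ 0 := by
      intro ℓ h0
      refine ht (Finset.mem_image.mpr ⟨ℓ, mem_univ ℓ, ?_⟩)
      rw [map_add, map_smul, smul_eq_mul] at h0
      field_simp [hc ℓ]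
      linear_combination -h0
    simp only [Set.mem_ofPred_eq, IsRoot, hq, sumDivNumerator,
      sum_mul_prod_erase_eq_prod_mul_sum_div _ _ hne, h _ hne, mul_zero]
  have hq0 : q = 0 :=
    eq_zero_of_infinite_isRoot q ((Finset.finite_toSet _).infinite_compl.mono hroots)
  simpa [hq0] using (hq 0).symm

theorem ker_le_ker_of_sumDivNumerator_eq_zero
    (hind : ∀ ℓ ℓ', ℓ ≠ ℓ' → LinearIndependent K ![φ ℓ, φ ℓ'])
    (hnum : ∀ b, sumDivNumerator φ ψ b = 0) (ℓ₀ : ι) :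
    LinearMap.ker (φ ℓ₀) ≤ LinearMap.ker (ψ ℓ₀) := by
  by_contra! hψ
  obtain ⟨x, hx, hψx⟩ := SetLike.not_le_iff_exists.mp hψ
  have hfactors : ∀ ℓ, ∃ x ∈ LinearMap.ker (φ ℓ₀), Function.update φ ℓ₀ (ψ ℓ₀) ℓ x ≠ 0 := by
    intro ℓ
    rcases eq_or_ne ℓ ℓ₀ with rfl | hℓ
    · exact ⟨x, hx, by simpa using hψx⟩
    · simpa [hℓ] using exists_mem_ker_apply_ne_zero (hind ℓ ℓ₀ hℓ)
  obtain ⟨b, hb, hbne⟩ := exists_forall_mem_ne_zero_of_forall_exists _ _ hfactors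
  have hprod : ψ ℓ₀ b * ∏ k ∈ univ.erase ℓ₀, φ k b ≠ 0 := by
    refine mul_ne_zero (by simpa using hbne ℓ₀) (prod_ne_zero_iff.mpr fun k hk => ?_)
    simpa [(mem_erase.mp hk).1] using hbne k
  exact hprod ((sumDivNumerator_of_apply_eq_zero hb).symm.trans (hnum b))

theorem exists_eq_smul_of_sum_div_eq_zero (hφ : ∀ ℓ, φ ℓ ≠ 0)
    (hind : ∀ ℓ ℓ', ℓ ≠ ℓ' → LinearIndependent K ![φ ℓ, φ ℓ'])
    (h : ∀ b, (∀ ℓ, φ ℓ b ≠ 0) → ∑ ℓ, ψ ℓ b / φ ℓ b = 0) :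
    ∃ μ : ι → K, ∑ ℓ, μ ℓ = 0 ∧ ∀ ℓ, ψ ℓ = μ ℓ • φ ℓ := by
  have hker ℓ := ker_le_ker_of_sumDivNumerator_eq_zero hind (sumDivNumerator_eq_zero hφ h) ℓ
  choose μ hμ using fun ℓ => exists_smul_eq_of_ker_le (hker ℓ)
  refine ⟨μ, ?_, fun ℓ => (hμ ℓ).symm⟩
  obtain ⟨b, hb⟩ := exists_forall_apply_ne_zero hφ
  simpa [← hμ, mul_div_assoc, div_self (hb _)] using h b hb

end Module.Dual

theorem statement10_general (n m : ℕ)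
    (y : Fin m → Fin n → ℂ) (hy0 : ∀ ℓ, y ℓ ≠ 0)
    (hind : ∀ ℓ ℓ' : Fin m, ℓ ≠ ℓ' → LinearIndependent ℂ ![y ℓ, y ℓ'])
    (v : Fin m → Fin n → ℂ)
    (hvan : ∀ b : Fin n → ℂ, (∀ ℓ, (∑ j, b j * y ℓ j) ≠ 0) →
      (∑ ℓ, (∑ j, b j * v ℓ j) / (∑ j, b j * y ℓ j)) = 0) :
    ∃ μ : Fin m → ℂ, (∑ ℓ, μ ℓ) = 0 ∧ ∀ ℓ, v ℓ = μ ℓ • y ℓ := by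
  let e := dotProductEquiv ℂ (Fin n)
  have he (w b : Fin n → ℂ) : e w b = ∑ j, b j * w j := by
    simp [e, dotProduct, mul_comm]
  obtain ⟨μ, hsum, hμ⟩ := Module.Dual.exists_eq_smul_of_sum_div_eq_zero
    (φ := fun ℓ => e (y ℓ)) (ψ := fun ℓ => e (v ℓ))
    (fun ℓ => e.map_ne_zero_iff.mpr (hy0 ℓ))
    (fun ℓ ℓ' h => by
      have := (hind ℓ ℓ' h).map' e.toLinearMap e.ker
      rwa [← FinVec.map_eq] at this)
    (fun b hb => by simpa only [he] using hvan b (by simpa only [he] using hb))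
  exact ⟨μ, hsum, fun ℓ => e.injective (by simpa using hμ ℓ)⟩

/-- If `y_1,…,y_m ∈ ℂ^n` are nonzero and pairwise linearly
independent and `Σ_ℓ (b·v_ℓ)/(b·y_ℓ) = 0` for all `b` avoiding the hyperplanes
`b·y_ℓ = 0`, then each `v_ℓ` is a multiple `μ_ℓ y_ℓ` with `Σ μ_ℓ = 0`. -/
theorem statement10 (n m : ℕ) (hn : 1 ≤ n) (hm1 : 1 ≤ m) (hmn : m ≤ n)
    (y : Fin m → Fin n → ℂ) (hy0 : ∀ ℓ, y ℓ ≠ 0)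
    (hind : ∀ ℓ ℓ' : Fin m, ℓ ≠ ℓ' → LinearIndependent ℂ ![y ℓ, y ℓ'])
    (v : Fin m → Fin n → ℂ)
    (hvan : ∀ b : Fin n → ℂ, (∀ ℓ, (∑ j, b j * y ℓ j) ≠ 0) →
      (∑ ℓ, (∑ j, b j * v ℓ j) / (∑ j, b j * y ℓ j)) = 0) :
    ∃ μ : Fin m → ℂ, (∑ ℓ, μ ℓ) = 0 ∧ ∀ ℓ, v ℓ = μ ℓ • y ℓ :=
  statement10_general n m y hy0 hind v hvan
end

section
/- Let d ≥ 2 and n ≥ 1. Let x^{(1)},…,x^{(d)} ∈ ℂ^n∖{0} and w^{(1)},…,w^{(d)} ∈ ℂ^n. Suppose that for every homogeneous form H of degree d in n variables with complex coefficients, (x^{(d)})^T · J^{H}(x^{(1)},…,x^{(d−1)})·(w^{(1)},…,w^{(d−1)}) + m^{(H)}(x^{(1)},…,x^{(d−1)})·w^{(d)} = 0, where (w^{(1)},…,w^{(d−1)}) is regarded as a column vector in ℂ^{(d−1)n} and the second term is the bilinear pairing Σ_i m_i^{(H)}(x^{(1)},…,x^{(d−1)})·w^{(d)}_i. Then for every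 b ∈ ℂ^n with b·x^{(i)} ≠ 0 for all i = 1,…,d, one has Σ_{i=1}^{d} (b·w^{(i)})/(b·x^{(i)}) = 0. -/
open MvPolynomial

/-! It suffices to test the hypothesis on the single form `H = (b·X)^d`. For it
`m^{(H)}(y) = d! (∏_k b·y^{(k)}) b` and the `(k, l)` entry of `J^H(x)` in row `i` is
`d! b_i b_l ∏_{k' ≠ k} b·x^{(k')}`, so the hypothesis reads
`d! ((b·x^{(d)}) Σ_k (b·w^{(k)}) ∏_{k' ≠ k} b·x^{(k')} + (∏_k b·x^{(k)}) (b·w^{(d)})) = 0`;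
dividing by `d! ∏_{i ≤ d} b·x^{(i)}` gives the claim. -/

open Finset Matrix

section LinearFormPower

variable {K : Type*} [CommSemiring K] {n : ℕ}

noncomputable def linForm (b : Fin n → K) : MvPolynomial (Fin n) K :=
  ∑ j, C (b j) * X j

theorem isHomogeneous_linForm (b : Fin n → K) : (linForm b).IsHomogeneous 1 :=
  IsHomogeneous.sum _ _ _ fun j _ => (isHomogeneous_X K j).C_mul (b j)

theorem pderiv_linForm (b : Fin n → K) (a : Fin n) : pderiv a (linForm b) = C (b a) := by
  simp [linForm, pderiv_X, Pi.single_apply]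

theorem iterPderiv_linForm_pow (b : Fin n → K) (js : List (Fin n)) (e : ℕ) :
    iterPderiv js (linForm b ^ e) =
      C ((e.descFactorial js.length : K) * (js.map b).prod) * linForm b ^ (e - js.length) := by
  induction js with
  | nil => simp [iterPderiv]
  | cons a t ih =>
    change pderiv a (iterPderiv t (linForm b ^ e)) = _
    rw [ih, Derivation.leibniz, Derivation.leibniz_pow, pderiv_C, pderiv_linForm,
      List.length_cons, Nat.descFactorial_succ, show e - t.length - 1 = e - (t.length + 1) by omega]
    simp only [smul_eq_mul, nsmul_eq_mul, mul_zero, add_zero, List.map_cons, List.prod_cons,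
      map_mul, map_natCast, Nat.cast_mul]
    ring

theorem mForm_linForm_pow {d : ℕ} (hd : 1 ≤ d) (b : Fin n → K) (y : Fin (d - 1) → Fin n → K)
    (i : Fin n) : mForm d n (linForm b ^ d) y i = d.factorial * b i * ∏ k, b ⬝ᵥ y k := by
  have hcoeff (j : Fin (d - 1) → Fin n) :
      eval 0 (pderiv i (iterPderiv (List.ofFn j) (linForm b ^ d))) =
        d.factorial * (b i * ∏ k, b (j k)) := by
    change eval 0 (iterPderiv (i :: List.ofFn j) (linForm b ^ d)) = _
    have hlen : (i :: List.ofFn j).length = d := by simp; omega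
    rw [iterPderiv_linForm_pow, hlen, Nat.sub_self, pow_zero, mul_one, eval_C,
      Nat.descFactorial_self]
    simp [List.map_ofFn, List.prod_ofFn]
  simp only [mForm, hcoeff, dotProduct, prod_univ_sum, Fintype.piFinset_univ, mul_sum,
    prod_mul_distrib]
  exact sum_congr rfl fun j _ => by ring

theorem jacMat_linForm_pow {d : ℕ} (hd : 1 ≤ d) (b : Fin n → K) (x : Fin (d - 1) → Fin n → K)
    (i : Fin n) (kl : Fin (d - 1) × Fin n) :
    jacMat d n (linForm b ^ d) x i kl =
      d.factorial * b i * (b kl.2 * ∏ k ∈ univ.erase kl.1, b ⬝ᵥ x k) := by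
  rw [jacMat, mForm_linForm_pow hd]
  congr 1
  rw [← Function.comp_def (b ⬝ᵥ ·), Function.comp_update, prod_update_of_mem (mem_univ _),
    sdiff_singleton_eq_erase, dotProduct_single, mul_one]
  rfl

end LinearFormPower

theorem sum_div_eq_sum_mul_prod_erase_div {ι K : Type*} [Fintype ι] [DecidableEq ι] [Field K]
    (u a : ι → K) (ha : ∀ k, a k ≠ 0) :
    ∑ k, u k / a k = (∑ k, u k * ∏ k' ∈ univ.erase k, a k') / ∏ k, a k := by
  rw [sum_div]
  refine sum_congr rfl fun k hk => ?_
  rw [← mul_prod_erase univ a hk,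
    mul_div_mul_right _ _ (prod_ne_zero_iff.mpr fun k' _ => ha k')]

theorem jacMat_mForm_pairing_linForm_pow {K : Type*} [CommSemiring K]
    {d n : ℕ} (hd : 1 ≤ d) (b : Fin n → K) (x w : Fin (d - 1) → Fin n → K) (xd wd : Fin n → K) :
    xd ⬝ᵥ (jacMat d n (linForm b ^ d) x *ᵥ fun kl => w kl.1 kl.2) +
        mForm d n (linForm b ^ d) x ⬝ᵥ wd =
      d.factorial * ((b ⬝ᵥ xd) * ∑ k, (b ⬝ᵥ w k) * ∏ k' ∈ univ.erase k, b ⬝ᵥ x k' +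
        (∏ k, b ⬝ᵥ x k) * (b ⬝ᵥ wd)) := by
  have hJ : (jacMat d n (linForm b ^ d) x *ᵥ fun kl => w kl.1 kl.2) =
      (d.factorial * ∑ k, (b ⬝ᵥ w k) * ∏ k' ∈ univ.erase k, b ⬝ᵥ x k') • b := by
    ext i
    simp only [Matrix.mulVec, dotProduct, jacMat_linForm_pow hd, Fintype.sum_prod_type,
      Pi.smul_apply, smul_eq_mul, mul_sum, sum_mul]
    exact sum_congr rfl fun k _ => sum_congr rfl fun l _ => by ring
  have hm : mForm d n (linForm b ^ d) x = (d.factorial * ∏ k, b ⬝ᵥ x k) • b :=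
    funext fun i => (mForm_linForm_pow hd b x i).trans <| by
      simp only [Pi.smul_apply, smul_eq_mul]; ring
  rw [hJ, hm, dotProduct_smul, smul_dotProduct, smul_eq_mul, smul_eq_mul, dotProduct_comm xd]
  ring

theorem statement11_general (d n : ℕ) (hd : 2 ≤ d)
    (x : Fin (d - 1) → Fin n → ℂ) (xd : Fin n → ℂ)
    (w : Fin (d - 1) → Fin n → ℂ) (wd : Fin n → ℂ)
    (hvan : ∀ H : MvPolynomial (Fin n) ℂ, H.IsHomogeneous d →
      (∑ i, xd i * (jacMat d n H x).mulVec (fun kl => w kl.1 kl.2) i) +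
        (∑ i, mForm d n H x i * wd i) = 0) :
    ∀ b : Fin n → ℂ, (∀ k, (∑ j, b j * x k j) ≠ 0) → (∑ j, b j * xd j) ≠ 0 →
      (∑ k, (∑ j, b j * w k j) / (∑ j, b j * x k j)) +
        (∑ j, b j * wd j) / (∑ j, b j * xd j) = 0 := by
  intro b (hb : ∀ k, b ⬝ᵥ x k ≠ 0) (hbd : b ⬝ᵥ xd ≠ 0)
  have hd1 : 1 ≤ d := by omega
  have key := hvan (linForm b ^ d) (by simpa using (isHomogeneous_linForm b).pow d)
  change xd ⬝ᵥ _ + _ ⬝ᵥ wd = 0 at key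
  rw [jacMat_mForm_pairing_linForm_pow hd1, mul_eq_zero,
    or_iff_right (Nat.cast_ne_zero.mpr d.factorial_ne_zero)] at key
  change ∑ k, (b ⬝ᵥ w k) / (b ⬝ᵥ x k) + (b ⬝ᵥ wd) / (b ⬝ᵥ xd) = 0
  have hP : ∏ k, b ⬝ᵥ x k ≠ 0 := prod_ne_zero_iff.mpr fun k _ => hb k
  rw [sum_div_eq_sum_mul_prod_erase_div _ _ hb, div_add_div _ _ hP hbd, div_eq_zero_iff]
  left
  linear_combination key

/-- If `(x^{(d)})^T J^H(x^{(1)},…,x^{(d-1)})·(w^{(1)},…,w^{(d-1)})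
+ m^{(H)}(x^{(1)},…,x^{(d-1)})·w^{(d)}` vanishes for every complex form `H` of
degree `d`, then `Σ_{i=1}^d (b·w^{(i)})/(b·x^{(i)}) = 0` whenever all the
denominators are nonzero. -/
theorem statement11 (d n : ℕ) (hd : 2 ≤ d) (hn : 1 ≤ n)
    (x : Fin (d - 1) → Fin n → ℂ) (xd : Fin n → ℂ)
    (w : Fin (d - 1) → Fin n → ℂ) (wd : Fin n → ℂ)
    (hx0 : ∀ k, x k ≠ 0) (hxd0 : xd ≠ 0)
    (hvan : ∀ H : MvPolynomial (Fin n) ℂ, H.IsHomogeneous d →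
      (∑ i, xd i * (jacMat d n H x).mulVec (fun kl => w kl.1 kl.2) i) +
        (∑ i, mForm d n H x i * wd i) = 0) :
    ∀ b : Fin n → ℂ, (∀ k, (∑ j, b j * x k j) ≠ 0) → (∑ j, b j * xd j) ≠ 0 →
      (∑ k, (∑ j, b j * w k j) / (∑ j, b j * x k j)) +
        (∑ j, b j * wd j) / (∑ j, b j * xd j) = 0 :=
  statement11_general d n hd x xd w wd hvan
end
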